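/- Refinement via piecewise approximation: let K = s(d+1). Suppose p is (η,s)-piecewise degree-d (i.e., there is an s-piecewise degree-d distribution q with TV(p,q) ≤ η), and suppose p̂ satisfies ‖p - p̂‖_{A_K} ≤ ζ. If p* is any s-piecewise degree-d distribution minimizing ‖p̂ - p*‖_{A_K} up to additive error η, then TV(p, p*) ≤ 2ζ + 4η. -/

import Mathlib

/-!
With `q` the piecewise approximant of `p`, the triangle inequalities for the TV and `A_K`
distances, together with `‖·‖_{A_K} ≤ TV`, reduce the claim to `TV(q, p*) ≤ ‖q - p*‖_{A_K}`.
The TV distance is the mass that `u = q - p*` puts on its positive part, and that part is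
covered by maximal runs on which `u ≥ 0`. Run boundaries are sign changes of `u`. A sign change
either sits at the start of a piece of `q` or `p*` (at most `2s - 2` of those), or is a sign
change of a single polynomial of degree `≤ d` on one of the at most `2s - 1` cells of the
common refinement, hence yields a root of it in a half-open unit window (at most `d` per cell).
So there are at most `s(d + 1)` runs.
-/

open Finset
open scoped Classical

/-- `S` is a union of at most `K` pairwise disjoint intervals inside `{0, ..., n-1}`. -/
def IsUnionOfIntervals (n K : ℕ) (S : Finset ℕ) : Prop :=
  ∃ I : Finset (ℕ × ℕ),
    I.card ≤ K ∧
    (∀ ab ∈ I, ab.1 ≤ ab.2 ∧ ab.2 < n) ∧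
    (∀ ab ∈ I, ∀ cd ∈ I, ab ≠ cd → Disjoint (Finset.Icc ab.1 ab.2) (Finset.Icc cd.1 cd.2)) ∧
    S = I.biUnion fun ab => Finset.Icc ab.1 ab.2

/-- The `A_K` distance `‖p - q‖_{A_K} = max_{S ∈ A_K} |p(S) - q(S)|`. -/
noncomputable def akDist (n K : ℕ) (p q : ℕ → ℝ) : ℝ :=
  sSup {x : ℝ | ∃ S : Finset ℕ, IsUnionOfIntervals n K S ∧
    x = |∑ i ∈ S, p i - ∑ i ∈ S, q i|}

/-- Total variation distance of vectors on `{0, ..., n-1}`: half the `L1` distance. -/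
noncomputable def tvDist (n : ℕ) (p q : ℕ → ℝ) : ℝ :=
  (1 / 2) * ∑ i ∈ Finset.range n, |p i - q i|

/-- `f` is an `s`-piecewise degree-`d` function on `{0, ..., n-1}`. -/
def IsPiecewisePoly (n s d : ℕ) (f : ℕ → ℝ) : Prop :=
  ∃ (I : Finset (ℕ × ℕ)) (P : ℕ × ℕ → Polynomial ℝ),
    I.card ≤ s ∧
    (∀ ab ∈ I, (P ab).natDegree ≤ d) ∧
    (∀ ab ∈ I, ∀ cd ∈ I, ab ≠ cd → Disjoint (Finset.Icc ab.1 ab.2) (Finset.Icc cd.1 cd.2)) ∧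
    Finset.range n = I.biUnion (fun ab => Finset.Icc ab.1 ab.2) ∧
    ∀ ab ∈ I, ∀ x ∈ Finset.Icc ab.1 ab.2, f x = (P ab).eval (x : ℝ)

/-- `f` is a probability distribution on `{0, ..., n-1}`. -/
def IsDistribution (n : ℕ) (f : ℕ → ℝ) : Prop :=
  (∀ x < n, 0 ≤ f x) ∧ ∑ x ∈ Finset.range n, f x = 1

lemma isUnionOfIntervals_empty (n K : ℕ) : IsUnionOfIntervals n K ∅ :=
  ⟨∅, by simp, by simp, by simp, by simp⟩

lemma IsUnionOfIntervals.mono {n K K' : ℕ} {S : Finset ℕ} (h : IsUnionOfIntervals n K S)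
    (hK : K ≤ K') : IsUnionOfIntervals n K' S := by
  obtain ⟨I, hcard, hI⟩ := h
  exact ⟨I, hcard.trans hK, hI⟩

lemma IsUnionOfIntervals.subset_range {n K : ℕ} {S : Finset ℕ} (h : IsUnionOfIntervals n K S) :
    S ⊆ range n := by
  obtain ⟨I, -, hI, -, rfl⟩ := h
  intro i hi
  obtain ⟨ab, hab, hi⟩ := mem_biUnion.1 hi
  exact mem_range.2 ((mem_Icc.1 hi).2.trans_lt (hI ab hab).2)

section AKDistance

variable {n K : ℕ} {p q r : ℕ → ℝ}

lemma bddAbove_akDist_set (n K : ℕ) (p q : ℕ → ℝ) :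
    BddAbove {x : ℝ | ∃ S : Finset ℕ, IsUnionOfIntervals n K S ∧
      x = |∑ i ∈ S, p i - ∑ i ∈ S, q i|} := by
  refine ⟨∑ i ∈ range n, |p i - q i|, ?_⟩
  rintro x ⟨S, hS, rfl⟩
  rw [← sum_sub_distrib]
  exact (abs_sum_le_sum_abs _ _).trans
    (sum_le_sum_of_subset_of_nonneg hS.subset_range fun i _ _ => abs_nonneg _)

lemma abs_sum_sub_le_akDist {S : Finset ℕ} (hS : IsUnionOfIntervals n K S) :
    |∑ i ∈ S, p i - ∑ i ∈ S, q i| ≤ akDist n K p q :=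
  le_csSup (bddAbove_akDist_set n K p q) ⟨S, hS, rfl⟩

lemma akDist_le_of_forall {C : ℝ}
    (h : ∀ S, IsUnionOfIntervals n K S → |∑ i ∈ S, p i - ∑ i ∈ S, q i| ≤ C) :
    akDist n K p q ≤ C :=
  csSup_le ⟨0, ∅, isUnionOfIntervals_empty n K, by simp⟩ (by rintro x ⟨S, hS, rfl⟩; exact h S hS)

lemma akDist_nonneg : 0 ≤ akDist n K p q :=
  (abs_nonneg _).trans (abs_sum_sub_le_akDist (isUnionOfIntervals_empty n K))

lemma akDist_comm (n K : ℕ) (p q : ℕ → ℝ) : akDist n K p q = akDist n K q p := by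
  simp only [akDist, abs_sub_comm]

lemma akDist_triangle : akDist n K p r ≤ akDist n K p q + akDist n K q r :=
  akDist_le_of_forall fun _ hS =>
    (abs_sub_le _ _ _).trans (add_le_add (abs_sum_sub_le_akDist hS) (abs_sum_sub_le_akDist hS))

end AKDistance

lemma tvDist_triangle {n : ℕ} {p q r : ℕ → ℝ} :
    tvDist n p r ≤ tvDist n p q + tvDist n q r := by
  simp only [tvDist, ← mul_add, ← sum_add_distrib]
  gcongr with i
  exact abs_sub_le _ _ _

section PositivePart

variable {ι : Type*} {s S : Finset ι} {u : ι → ℝ}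

lemma sum_abs_eq_two_mul_sum_posPart (hu : ∑ i ∈ s, u i = 0) :
    ∑ i ∈ s, |u i| = 2 * ∑ i ∈ s, (u i)⁺ := by
  have h : ∀ x : ℝ, |x| = 2 * x⁺ - x := fun x => by
    rw [← posPart_add_negPart]; linarith [posPart_sub_negPart x]
  simp only [h, sum_sub_distrib, ← mul_sum, hu, sub_zero]

lemma abs_sum_le_half_sum_abs (hu : ∑ i ∈ s, u i = 0) (hS : S ⊆ s) :
    |∑ i ∈ S, u i| ≤ (1 / 2) * ∑ i ∈ s, |u i| := by
  rw [sum_abs_eq_two_mul_sum_posPart hu, one_div, inv_mul_cancel_left₀ two_ne_zero]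
  have hle : ∀ T ⊆ s, ∑ i ∈ T, u i ≤ ∑ i ∈ s, (u i)⁺ := fun T hT =>
    (sum_le_sum fun i _ => le_posPart (u i)).trans
      (sum_le_sum_of_subset_of_nonneg hT fun i _ _ => posPart_nonneg (u i))
  have hcompl : ∑ i ∈ s \ S, u i = -∑ i ∈ S, u i := by
    rw [eq_neg_iff_add_eq_zero, sum_sdiff hS, hu]
  rw [abs_le]
  constructor
  · linarith [hle (s \ S) sdiff_subset]
  · exact hle S hS

end PositivePart

lemma akDist_le_tvDist {n K : ℕ} {p q : ℕ → ℝ}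
    (hpq : ∑ i ∈ range n, p i = ∑ i ∈ range n, q i) :
    akDist n K p q ≤ tvDist n p q :=
  akDist_le_of_forall fun S hS => by
    rw [← sum_sub_distrib]
    exact abs_sum_le_half_sum_abs (by rw [sum_sub_distrib, hpq, sub_self]) hS.subset_range

section Runs

variable {n : ℕ} {S : Finset ℕ}

lemma exists_add_notMem (S : Finset ℕ) (l : ℕ) : ∃ k, l + 1 + k ∉ S :=
  ⟨S.sup id, fun h => by have := le_sup (f := id) h; simp only [id] at this; omega⟩

noncomputable def runEnd (S : Finset ℕ) (l : ℕ) : ℕ :=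
  l + Nat.find (exists_add_notMem S l)

def leftEnds (S : Finset ℕ) : Finset ℕ :=
  S.filter fun i => i = 0 ∨ i - 1 ∉ S

def boundary (n : ℕ) (S : Finset ℕ) : Finset ℕ :=
  (Ico 1 n).filter fun c => ¬(c - 1 ∈ S ↔ c ∈ S)

lemma le_runEnd (S : Finset ℕ) (l : ℕ) : l ≤ runEnd S l :=
  Nat.le_add_right _ _

lemma runEnd_add_one_notMem (S : Finset ℕ) (l : ℕ) : runEnd S l + 1 ∉ S := by
  have := Nat.find_spec (exists_add_notMem S l)
  rwa [runEnd, add_right_comm]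

lemma mem_of_mem_Icc_runEnd {l x : ℕ} (hl : l ∈ S) (hx : x ∈ Icc l (runEnd S l)) : x ∈ S := by
  rw [mem_Icc] at hx
  obtain rfl | hlt := hx.1.eq_or_lt
  · exact hl
  · have hk : x - l - 1 < Nat.find (exists_add_notMem S l) := by
      have := hx.2; unfold runEnd at this; omega
    have := Nat.find_min (exists_add_notMem S l) hk
    rwa [not_not, show l + 1 + (x - l - 1) = x by omega] at this

lemma runEnd_mem {l : ℕ} (hl : l ∈ S) : runEnd S l ∈ S :=
  mem_of_mem_Icc_runEnd hl (right_mem_Icc.2 (le_runEnd S l))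

lemma runEnd_add_one_lt {l l' : ℕ} (hl : l ∈ S) (hl' : l' ∈ leftEnds S) (hlt : l < l') :
    runEnd S l + 1 < l' := by
  obtain ⟨hl'S, hl'⟩ := mem_filter.1 hl'
  by_contra! h
  have : l' - 1 ∈ S := mem_of_mem_Icc_runEnd hl (mem_Icc.2 ⟨by omega, by omega⟩)
  rcases hl' with h0 | h1
  · omega
  · exact h1 this

lemma biUnion_leftEnds_Icc_runEnd (S : Finset ℕ) :
    (leftEnds S).biUnion (fun l => Icc l (runEnd S l)) = S := by
  refine Subset.antisymm (fun i hi => ?_) fun i hi => ?_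
  · obtain ⟨l, hl, hi⟩ := mem_biUnion.1 hi
    exact mem_of_mem_Icc_runEnd (mem_filter.1 hl).1 hi
  induction i using Nat.strong_induction_on with
  | _ i ih =>
    by_cases hiL : i ∈ leftEnds S
    · exact mem_biUnion.2 ⟨i, hiL, mem_Icc.2 ⟨le_rfl, le_runEnd S i⟩⟩
    obtain ⟨hi0, hprev⟩ : i ≠ 0 ∧ i - 1 ∈ S := by
      simpa [leftEnds, hi, not_or] using hiL
    obtain ⟨l, hl, hmem⟩ := mem_biUnion.1 (ih (i - 1) (by omega) hprev)
    refine mem_biUnion.2 ⟨l, hl, mem_Icc.2 ⟨by grind, ?_⟩⟩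
    by_contra! h
    have : runEnd S l + 1 = i := by grind
    exact runEnd_add_one_notMem S l (this ▸ hi)

lemma isUnionOfIntervals_card_leftEnds (hS : S ⊆ range n) :
    IsUnionOfIntervals n (leftEnds S).card S := by
  have hsep : ∀ l ∈ leftEnds S, ∀ l' ∈ leftEnds S, l < l' →
      Disjoint (Icc l (runEnd S l)) (Icc l' (runEnd S l')) := fun l hl l' hl' hlt => by
    have := runEnd_add_one_lt (mem_filter.1 hl).1 hl' hlt
    exact disjoint_left.2 fun x hx hx' => by simp only [mem_Icc] at hx hx'; omega
  refine ⟨(leftEnds S).image fun l => (l, runEnd S l), card_image_le, ?_, ?_, ?_⟩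
  · simp only [mem_image]
    rintro _ ⟨l, hl, rfl⟩
    exact ⟨le_runEnd S l, mem_range.1 (hS (runEnd_mem (mem_filter.1 hl).1))⟩
  · simp only [mem_image]
    rintro _ ⟨l, hl, rfl⟩ _ ⟨l', hl', rfl⟩ hne
    rcases lt_or_gt_of_ne fun h : l = l' => hne (h ▸ rfl) with h | h
    · exact hsep l hl l' hl' h
    · exact (hsep l' hl' l hl h).symm
  · rw [image_biUnion, biUnion_leftEnds_Icc_runEnd]

/-- Every left end other than `0` is a boundary point, and so is the point just after every
run that ends before `n`; these are distinct, and there are as many runs as left ends. -/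
lemma two_mul_card_leftEnds_le (hS : S ⊆ range n) :
    2 * (leftEnds S).card ≤ (boundary n S).card + 2 := by
  set L := leftEnds S
  set R := L.image fun l => runEnd S l + 1
  have hLS : ∀ l ∈ L, l ∈ S := fun l hl => (mem_filter.1 hl).1
  have hR : R.card = L.card := by
    refine card_image_of_injOn fun l hl l' hl' h => ?_
    by_contra hne
    rcases lt_or_gt_of_ne hne with hlt | hlt
    · have := runEnd_add_one_lt (hLS l hl) hl' hlt
      have := le_runEnd S l'
      omega
    · have := runEnd_add_one_lt (hLS l' hl') hl hlt
      have := le_runEnd S l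
      omega
  have hA : L.erase 0 ⊆ boundary n S := fun l hl => by
    obtain ⟨hl0, hl⟩ := mem_erase.1 hl
    obtain ⟨hlS, hl'⟩ := mem_filter.1 hl
    have := mem_range.1 (hS hlS)
    simp only [boundary, mem_filter, mem_Ico]
    refine ⟨⟨by omega, this⟩, ?_⟩
    tauto
  have hRsub : R ⊆ insert n (boundary n S) := fun c hc => by
    obtain ⟨l, hl, rfl⟩ := mem_image.1 hc
    have hend := runEnd_mem (hLS l hl)
    have := mem_range.1 (hS hend)
    rcases (show runEnd S l + 1 = n ∨ runEnd S l + 1 < n by omega) with h | h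
    · exact h ▸ mem_insert_self _ _
    · refine mem_insert_of_mem (mem_filter.2 ⟨mem_Ico.2 ⟨by omega, h⟩, ?_⟩)
      simp only [add_tsub_cancel_right, hend, true_iff]
      exact runEnd_add_one_notMem S l
  have hdisj : Disjoint (L.erase 0) R := disjoint_left.2 fun c hc hcR => by
    obtain ⟨l, -, rfl⟩ := mem_image.1 hcR
    exact runEnd_add_one_notMem S l (hLS _ (mem_of_mem_erase hc))
  have hunion := card_le_card (union_subset (hA.trans (subset_insert _ _)) hRsub)
  rw [card_union_of_disjoint hdisj] at hunion
  have := card_insert_le n (boundary n S)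
  have := pred_card_le_card_erase (s := L) (a := 0)
  omega

lemma isUnionOfIntervals_of_card_boundary {K : ℕ} (hS : S ⊆ range n)
    (hK : (boundary n S).card + 2 ≤ 2 * K) : IsUnionOfIntervals n K S :=
  (isUnionOfIntervals_card_leftEnds hS).mono (by have := two_mul_card_leftEnds_le hS; omega)

end Runs

section SignChanges

variable {n : ℕ} {u : ℕ → ℝ}

/-- Requiring `u c ≠ 0` makes the root produced by a crossing of a polynomial lie in the
half-open window `[c - 1, c)`, so that distinct crossings give distinct roots. -/
noncomputable def crossings (n : ℕ) (u : ℕ → ℝ) : Finset ℕ :=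
  (Ico 1 n).filter fun c => u (c - 1) * u c ≤ 0 ∧ u c ≠ 0

/-- Zeros of `u` next to a positive run are absorbed into it: the boundary of `{u > 0}` itself
may contain points `c` with `u c = 0`, which are not crossings. -/
noncomputable def posRuns (n : ℕ) (u : ℕ → ℝ) : Finset ℕ :=
  (range n).filter fun i => ∃ j ≤ i, 0 < u j ∧ ∀ x ∈ Icc j i, 0 ≤ u x

lemma posRuns_subset_range : posRuns n u ⊆ range n :=
  filter_subset _ _

lemma nonneg_of_mem_posRuns {i : ℕ} (hi : i ∈ posRuns n u) : 0 ≤ u i := by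
  obtain ⟨-, j, hj, -, hall⟩ := mem_filter.1 hi
  exact hall i (mem_Icc.2 ⟨hj, le_rfl⟩)

lemma mem_posRuns_of_pos {i : ℕ} (hi : i < n) (hpos : 0 < u i) : i ∈ posRuns n u :=
  mem_filter.2 ⟨mem_range.2 hi, i, le_rfl, hpos, fun x hx => by
    rw [show x = i by simpa using hx]; exact hpos.le⟩

lemma sum_posRuns : ∑ i ∈ posRuns n u, u i = ∑ i ∈ range n, (u i)⁺ := by
  rw [posRuns, sum_filter]
  refine sum_congr rfl fun i hi => ?_
  rcases lt_or_ge 0 (u i) with hpos | hnpos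
  · rw [if_pos (mem_filter.1 (mem_posRuns_of_pos (mem_range.1 hi) hpos)).2,
      posPart_eq_self.2 hpos.le]
  · rw [posPart_eq_zero.2 hnpos]
    split_ifs with h
    · exact le_antisymm hnpos (nonneg_of_mem_posRuns (mem_filter.2 ⟨hi, h⟩))
    · rfl

lemma boundary_posRuns_subset_crossings : boundary n (posRuns n u) ⊆ crossings n u := by
  intro c hc
  obtain ⟨hcI, hxor⟩ := mem_filter.1 hc
  have hc1 := (mem_Ico.1 hcI).1
  have hcn := (mem_Ico.1 hcI).2
  refine mem_filter.2 ⟨hcI, ?_⟩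
  by_cases hcS : c ∈ posRuns n u
  · have hprev : c - 1 ∉ posRuns n u := by tauto
    obtain ⟨-, j, hj, hjpos, hall⟩ := mem_filter.1 hcS
    have hjc : j = c := by
      by_contra hne
      exact hprev (mem_filter.2 ⟨mem_range.2 (by omega), j, by omega, hjpos,
        fun x hx => hall x (by simp only [mem_Icc] at hx ⊢; omega)⟩)
    subst hjc
    have : u (j - 1) ≤ 0 := not_lt.1 fun h => hprev (mem_posRuns_of_pos (by omega) h)
    exact ⟨mul_nonpos_of_nonpos_of_nonneg this hjpos.le, hjpos.ne'⟩
  · have hprev : c - 1 ∈ posRuns n u := by tauto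
    obtain ⟨-, j, hj, hjpos, hall⟩ := mem_filter.1 hprev
    have hneg : u c < 0 := not_le.1 fun h => hcS (mem_filter.2 ⟨mem_range.2 hcn, j, by omega,
      hjpos, fun x hx => by
        rcases (show x ≤ c - 1 ∨ x = c by simp only [mem_Icc] at hx; omega) with hx' | rfl
        · exact hall x (by simp only [mem_Icc] at hx ⊢; omega)
        · exact h⟩)
    exact ⟨mul_nonpos_of_nonneg_of_nonpos (nonneg_of_mem_posRuns hprev) hneg.le, hneg.ne⟩

lemma exists_isUnionOfIntervals_sum_eq_sum_posPart {K : ℕ}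
    (hK : (crossings n u).card + 2 ≤ 2 * K) :
    ∃ S, IsUnionOfIntervals n K S ∧ ∑ i ∈ S, u i = ∑ i ∈ range n, (u i)⁺ :=
  ⟨posRuns n u, isUnionOfIntervals_of_card_boundary posRuns_subset_range
    (by have := card_le_card (boundary_posRuns_subset_crossings (n := n) (u := u)); omega),
    sum_posRuns⟩

end SignChanges

open Polynomial in
lemma exists_isRoot_of_eval_mul_nonpos {f : ℝ[X]} {x : ℝ}
    (h : f.eval (x - 1) * f.eval x ≤ 0) (hx : f.eval x ≠ 0) :
    ∃ r, x - 1 ≤ r ∧ r < x ∧ f.IsRoot r := by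
  have h0 : (0 : ℝ) ∈ Set.uIcc (f.eval (x - 1)) (f.eval x) := by
    rw [Set.mem_uIcc]
    rcases mul_nonpos_iff.1 h with h | h
    · exact Or.inr ⟨h.2, h.1⟩
    · exact Or.inl h
  obtain ⟨r, hr, hr0⟩ := intermediate_value_uIcc f.continuous.continuousOn h0
  rw [Set.uIcc_of_le (by linarith)] at hr
  exact ⟨r, hr.1, hr.2.lt_of_ne (by rintro rfl; exact hx hr0), hr0⟩

open Polynomial in
/-- Each weak sign change of `f` on a unit step `[c - 1, c]` gives a root in `[c - 1, c)`, and
these half-open windows are disjoint. -/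
lemma card_le_natDegree_of_eval_mul_nonpos {C : Finset ℕ} {f : ℝ[X]}
    (h : ∀ c ∈ C, f.eval ((c : ℝ) - 1) * f.eval (c : ℝ) ≤ 0 ∧ f.eval (c : ℝ) ≠ 0) :
    C.card ≤ f.natDegree := by
  rcases C.eq_empty_or_nonempty with rfl | ⟨c₀, hc₀⟩
  · simp
  have hf : f ≠ 0 := by rintro rfl; exact (h c₀ hc₀).2 (eval_zero)
  choose! r hr using fun c hc => exists_isRoot_of_eval_mul_nonpos (h c hc).1 (h c hc).2
  calc C.card ≤ f.roots.toFinset.card := by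
        refine card_le_card_of_injOn r (fun c hc => ?_) fun c hc c' hc' hrc => ?_
        · exact Multiset.mem_toFinset.2 ((mem_roots hf).2 (hr c hc).2.2)
        · have := hr c hc; have := hr c' hc'
          have : (c : ℝ) < c' + 1 := by linarith
          have : (c' : ℝ) < c + 1 := by linarith
          norm_cast at *; omega
    _ ≤ f.roots.card := Multiset.toFinset_card_le _
    _ ≤ f.natDegree := card_roots' f

open Polynomial in
lemma card_filter_crossings_le_natDegree {n : ℕ} {u : ℕ → ℝ} {f : ℝ[X]} {T : Finset ℕ}
    (hf : ∀ x ∈ T, u x = f.eval (x : ℝ)) :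
    ((crossings n u).filter fun c => c - 1 ∈ T ∧ c ∈ T).card ≤ f.natDegree := by
  refine card_le_natDegree_of_eval_mul_nonpos fun c hc => ?_
  obtain ⟨hcX, hprev, hcur⟩ := mem_filter.1 hc
  rw [← Nat.cast_pred (mem_Ico.1 (mem_filter.1 hcX).1).1, ← hf _ hprev, ← hf _ hcur]
  exact (mem_filter.1 hcX).2

/-- Empty "intervals" `(a, b)` with `b < a` may occur in `I`. -/
def IsIntervalPartition (n : ℕ) (I : Finset (ℕ × ℕ)) : Prop :=
  (∀ ab ∈ I, ∀ cd ∈ I, ab ≠ cd → Disjoint (Icc ab.1 ab.2) (Icc cd.1 cd.2)) ∧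
    range n = I.biUnion fun ab => Icc ab.1 ab.2

def interCell (π : (ℕ × ℕ) × (ℕ × ℕ)) : Finset ℕ :=
  Icc π.1.1 π.1.2 ∩ Icc π.2.1 π.2.2

/-- The nonempty cells of the common refinement of two interval partitions. -/
def overlaps (I J : Finset (ℕ × ℕ)) : Finset ((ℕ × ℕ) × (ℕ × ℕ)) :=
  (I ×ˢ J).filter fun π => (interCell π).Nonempty

namespace IsIntervalPartition

variable {n : ℕ} {I J : Finset (ℕ × ℕ)}

lemma exists_mem (hI : IsIntervalPartition n I) {x : ℕ} (hx : x < n) :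
    ∃ ab ∈ I, x ∈ Icc ab.1 ab.2 := by
  have := mem_range.2 hx
  rwa [hI.2, mem_biUnion] at this

lemma eq_of_mem (hI : IsIntervalPartition n I) {ab cd : ℕ × ℕ} (hab : ab ∈ I) (hcd : cd ∈ I)
    {x : ℕ} (hxab : x ∈ Icc ab.1 ab.2) (hxcd : x ∈ Icc cd.1 cd.2) : ab = cd := by
  by_contra hne
  exact disjoint_left.1 (hI.1 ab hab cd hcd hne) hxab hxcd

lemma zero_mem_image_fst (hI : IsIntervalPartition n I) (hn : 0 < n) : 0 ∈ I.image Prod.fst := by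
  obtain ⟨ab, hab, h0⟩ := hI.exists_mem hn
  exact mem_image.2 ⟨ab, hab, by simp only [mem_Icc] at h0; omega⟩

lemma card_union_image_fst_add_one_le (hI : IsIntervalPartition n I)
    (hJ : IsIntervalPartition n J) (hn : 0 < n) :
    (I.image Prod.fst ∪ J.image Prod.fst).card + 1 ≤ I.card + J.card := by
  have h0 : 0 ∈ I.image Prod.fst ∩ J.image Prod.fst :=
    mem_inter.2 ⟨hI.zero_mem_image_fst hn, hJ.zero_mem_image_fst hn⟩
  have := card_union_add_card_inter (I.image Prod.fst) (J.image Prod.fst)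
  have := card_pos.2 ⟨0, h0⟩
  have := card_image_le (s := I) (f := Prod.fst)
  have := card_image_le (s := J) (f := Prod.fst)
  omega

/-- A cell of the common refinement is determined by its left end, the larger of the two left
ends. -/
lemma card_overlaps_le (hI : IsIntervalPartition n I) (hJ : IsIntervalPartition n J) :
    (overlaps I J).card ≤ (I.image Prod.fst ∪ J.image Prod.fst).card := by
  have hleft : ∀ π ∈ overlaps I J, max π.1.1 π.2.1 ∈ interCell π := fun π hπ => by
    obtain ⟨x, hx⟩ := (mem_filter.1 hπ).2
    simp only [interCell, mem_inter, mem_Icc] at hx ⊢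
    omega
  refine card_le_card_of_injOn (fun π => max π.1.1 π.2.1) (fun π hπ => ?_) fun π hπ π' hπ' h => ?_
  · obtain ⟨hπI, hπJ⟩ := mem_product.1 (mem_filter.1 hπ).1
    rcases max_choice π.1.1 π.2.1 with h | h <;> simp only [coe_union, coe_image] <;> rw [h]
    · exact Or.inl ⟨π.1, hπI, rfl⟩
    · exact Or.inr ⟨π.2, hπJ, rfl⟩
  · obtain ⟨hπI, hπJ⟩ := mem_product.1 (mem_filter.1 hπ).1
    obtain ⟨hπI', hπJ'⟩ := mem_product.1 (mem_filter.1 hπ').1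
    have hx := mem_inter.1 (hleft π hπ)
    have hx' := mem_inter.1 (hleft π' hπ')
    simp only at h
    rw [h] at hx
    exact Prod.ext (hI.eq_of_mem hπI hπI' hx.1 hx'.1) (hJ.eq_of_mem hπJ hπJ' hx.2 hx'.2)

lemma exists_overlap_of_notMem (hI : IsIntervalPartition n I) (hJ : IsIntervalPartition n J)
    {c : ℕ} (hc : c ∈ Ico 1 n) (hB : c ∉ I.image Prod.fst ∪ J.image Prod.fst) :
    ∃ π ∈ overlaps I J, c - 1 ∈ interCell π ∧ c ∈ interCell π := by
  have hcn := (mem_Ico.1 hc).2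
  obtain ⟨ab, hab, hcab⟩ := hI.exists_mem hcn
  obtain ⟨cd, hcd, hccd⟩ := hJ.exists_mem hcn
  have hab1 : ab.1 ≠ c := fun h => hB (mem_union_left _ (mem_image.2 ⟨ab, hab, h⟩))
  have hcd1 : cd.1 ≠ c := fun h => hB (mem_union_right _ (mem_image.2 ⟨cd, hcd, h⟩))
  have hcell : c ∈ interCell (ab, cd) := mem_inter.2 ⟨hcab, hccd⟩
  refine ⟨(ab, cd), mem_filter.2 ⟨mem_product.2 ⟨hab, hcd⟩, c, hcell⟩, ?_, hcell⟩
  simp only [interCell, mem_inter, mem_Icc] at hcell ⊢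
  omega

end IsIntervalPartition

open Polynomial in
/-- Crossings of `q - t` either start an interval of one of the partitions (`0` is the start of
both) or are sign changes of a single polynomial on a cell of the common refinement. -/
lemma card_crossings_sub_add_two_le {n s₁ s₂ d : ℕ} {q t : ℕ → ℝ} (hn : 0 < n)
    (hq : IsPiecewisePoly n s₁ d q) (ht : IsPiecewisePoly n s₂ d t) :
    (crossings n (q - t)).card + 2 ≤ (s₁ + s₂) * (d + 1) := by
  obtain ⟨I, P, hIcard, hPdeg, hIdisj, hIcover, hP⟩ := hq
  obtain ⟨J, Q, hJcard, hQdeg, hJdisj, hJcover, hQ⟩ := ht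
  have hI : IsIntervalPartition n I := ⟨hIdisj, hIcover⟩
  have hJ : IsIntervalPartition n J := ⟨hJdisj, hJcover⟩
  set B := I.image Prod.fst ∪ J.image Prod.fst
  have hsub : crossings n (q - t) ⊆ B.erase 0 ∪ (overlaps I J).biUnion fun π =>
      (crossings n (q - t)).filter fun c => c - 1 ∈ interCell π ∧ c ∈ interCell π := by
    intro c hc
    have hcI := (mem_filter.1 hc).1
    by_cases hcB : c ∈ B
    · exact mem_union_left _ (mem_erase.2 ⟨by have := (mem_Ico.1 hcI).1; omega, hcB⟩)
    · obtain ⟨π, hπ, hcell⟩ := hI.exists_overlap_of_notMem hJ hcI hcB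
      exact mem_union_right _ (mem_biUnion.2 ⟨π, hπ, mem_filter.2 ⟨hc, hcell⟩⟩)
  have hcell : ∀ π ∈ overlaps I J,
      ((crossings n (q - t)).filter fun c => c - 1 ∈ interCell π ∧ c ∈ interCell π).card ≤ d := by
    intro π hπ
    obtain ⟨hπI, hπJ⟩ := mem_product.1 (mem_filter.1 hπ).1
    refine (card_filter_crossings_le_natDegree fun x hx => ?_).trans
      ((natDegree_sub_le _ _).trans (max_le (hPdeg _ hπI) (hQdeg _ hπJ)))
    rw [Pi.sub_apply, eval_sub, hP _ hπI x (mem_inter.1 hx).1, hQ _ hπJ x (mem_inter.1 hx).2]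
  have hB0 : (B.erase 0).card + 1 = B.card :=
    card_erase_add_one (mem_union_left _ (hI.zero_mem_image_fst hn))
  calc (crossings n (q - t)).card + 2
      ≤ (B.erase 0).card + (overlaps I J).card * d + 2 := by
        gcongr
        exact (card_le_card hsub).trans ((card_union_le _ _).trans
          (by gcongr; exact card_biUnion_le_card_mul _ _ _ hcell))
    _ ≤ (B.card + 1) * (d + 1) := by
        have := Nat.mul_le_mul_right d (hI.card_overlaps_le hJ)
        nlinarith
    _ ≤ (s₁ + s₂) * (d + 1) := Nat.mul_le_mul_right _
        ((hI.card_union_image_fst_add_one_le hJ hn).trans (add_le_add hIcard hJcard))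

lemma tvDist_le_akDist {n s d : ℕ} {q t : ℕ → ℝ} (hq : IsPiecewisePoly n s d q)
    (ht : IsPiecewisePoly n s d t) (hqt : ∑ i ∈ range n, q i = ∑ i ∈ range n, t i) :
    tvDist n q t ≤ akDist n (s * (d + 1)) q t := by
  rcases Nat.eq_zero_or_pos n with rfl | hn
  · simpa [tvDist] using akDist_nonneg
  obtain ⟨S, hS, hsum⟩ := exists_isUnionOfIntervals_sum_eq_sum_posPart
    (by have := card_crossings_sub_add_two_le hn hq ht; linarith :
      (crossings n (q - t)).card + 2 ≤ 2 * (s * (d + 1)))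
  have hzero : ∑ i ∈ range n, (q - t) i = 0 := by simp [sum_sub_distrib, hqt]
  calc tvDist n q t = ∑ i ∈ S, (q - t) i := by
        rw [hsum, tvDist, show (fun i => |q i - t i|) = fun i => |(q - t) i| from rfl,
          sum_abs_eq_two_mul_sum_posPart hzero]
        ring
    _ ≤ |∑ i ∈ S, q i - ∑ i ∈ S, t i| := by simp only [Pi.sub_apply, sum_sub_distrib, le_abs_self]
    _ ≤ akDist n (s * (d + 1)) q t := abs_sum_sub_le_akDist hS

theorem refinement_piecewise_general (n s d : ℕ) (η ζ : ℝ)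
    (p phat pstar : ℕ → ℝ)
    (hp : IsDistribution n p)
    (happrox : ∃ q : ℕ → ℝ, IsDistribution n q ∧ IsPiecewisePoly n s d q ∧ tvDist n p q ≤ η)
    (hclose : akDist n (s * (d + 1)) p phat ≤ ζ)
    (hstar_distr : IsDistribution n pstar)
    (hstar_piecewise : IsPiecewisePoly n s d pstar)
    (hmin : ∀ r : ℕ → ℝ, IsDistribution n r → IsPiecewisePoly n s d r →
      akDist n (s * (d + 1)) phat pstar ≤ akDist n (s * (d + 1)) phat r + η) :
    tvDist n p pstar ≤ 2 * ζ + 4 * η := by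
  obtain ⟨q, hq_distr, hq_piecewise, hpq⟩ := happrox
  set K := s * (d + 1)
  have hpq_ak : akDist n K p q ≤ η := (akDist_le_tvDist (hp.2.trans hq_distr.2.symm)).trans hpq
  have hphat_pstar : akDist n K phat pstar ≤ ζ + 2 * η := by
    have := akDist_triangle (n := n) (K := K) (p := phat) (q := p) (r := q)
    linarith [hmin q hq_distr hq_piecewise, akDist_comm n K phat p]
  have hq_pstar : akDist n K q pstar ≤ 2 * ζ + 3 * η := by
    have := akDist_triangle (n := n) (K := K) (p := q) (q := p) (r := phat)
    have := akDist_triangle (n := n) (K := K) (p := q) (q := phat) (r := pstar)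
    linarith [akDist_comm n K q p]
  calc tvDist n p pstar ≤ tvDist n p q + tvDist n q pstar := tvDist_triangle
    _ ≤ η + akDist n K q pstar := add_le_add hpq
        (tvDist_le_akDist hq_piecewise hstar_piecewise (hq_distr.2.trans hstar_distr.2.symm))
    _ ≤ 2 * ζ + 4 * η := by linarith

/-- Refinement via piecewise polynomial approximation: let `K = s(d+1)`. If `p` is
`(η, s)`-piecewise degree-`d` (i.e. within TV distance `η` of an `s`-piecewise degree-`d`
distribution), `p̂` satisfies `‖p - p̂‖_{A_K} ≤ ζ`, and `p*` is an `s`-piecewise degree-`d`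
distribution minimizing `‖p̂ - p*‖_{A_K}` up to additive error `η`, then
`TV(p, p*) ≤ 2ζ + 4η`. -/
theorem refinement_piecewise (n s d : ℕ) (η ζ : ℝ) (hη : 0 ≤ η) (hζ : 0 ≤ ζ)
    (p phat pstar : ℕ → ℝ)
    (hp : IsDistribution n p)
    (happrox : ∃ q : ℕ → ℝ, IsDistribution n q ∧ IsPiecewisePoly n s d q ∧ tvDist n p q ≤ η)
    (hclose : akDist n (s * (d + 1)) p phat ≤ ζ)
    (hstar_distr : IsDistribution n pstar)
    (hstar_piecewise : IsPiecewisePoly n s d pstar)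
    (hmin : ∀ r : ℕ → ℝ, IsDistribution n r → IsPiecewisePoly n s d r →
      akDist n (s * (d + 1)) phat pstar ≤ akDist n (s * (d + 1)) phat r + η) :
    tvDist n p pstar ≤ 2 * ζ + 4 * η :=
  refinement_piecewise_general n s d η ζ p phat pstar hp happrox hclose hstar_distr hstar_piecewise
    hmin
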